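/- Reciprocal-cardinality bound for B-typical sets: for every ε > 0 there exists N such that for all n ≥ N and every sequence u⃗ ∈ B^n_{V,ε}(U), one has 1/|B^n_{V,ε}(U)| ≤ 2^{3nε}·p(u⃗). -/

import Mathlib

open Real
open scoped BigOperators Classical

noncomputable section

/-- Probability of a length-`n` sequence under the i.i.d. product of the pmf `p`. -/
def seqProb {α : Type*} (p : α → ℝ) {n : ℕ} (u : Fin n → α) : ℝ :=
  ∏ i, p (u i)

/-- Entropy in bits of a pmf on a finite alphabet. -/
def ent {α : Type*} [Fintype α] (p : α → ℝ) : ℝ :=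
  -∑ a, p a * logb 2 (p a)

variable {U V : Type*} [Fintype U] [Fintype V]

/-- `U`-marginal of a joint pmf on `U × V`. -/
def margU (p : U × V → ℝ) : U → ℝ := fun u => ∑ v, p (u, v)

/-- `V`-marginal of a joint pmf on `U × V`. -/
def margV (p : U × V → ℝ) : V → ℝ := fun v => ∑ u, p (u, v)

/-- Conditional pmf of `V` given `U`. -/
def condVU (p : U × V → ℝ) (u : U) (v : V) : ℝ := p (u, v) / margU p u

/-- The weakly typical set `A^n_ε(U)` with respect to a pmf `p`. -/
def typicalSet {α : Type*} [Fintype α] (p : α → ℝ) (n : ℕ) (ε : ℝ) :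
    Set (Fin n → α) :=
  {u | 0 < seqProb p u ∧ |(-(1 / (n : ℝ)) * logb 2 (seqProb p u)) - ent p| ≤ ε}

/-- The jointly typical set `A^n_ε(UV)` with respect to a joint pmf `p`. -/
def jointTypicalSet (p : U × V → ℝ) (n : ℕ) (ε : ℝ) :
    Set ((Fin n → U) × (Fin n → V)) :=
  {uv | 0 < seqProb (margU p) uv.1 ∧ 0 < seqProb (margV p) uv.2 ∧
    0 < seqProb p (fun i => (uv.1 i, uv.2 i)) ∧
    |(-(1 / (n : ℝ)) * logb 2 (seqProb (margU p) uv.1)) - ent (margU p)| ≤ ε ∧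
    |(-(1 / (n : ℝ)) * logb 2 (seqProb (margV p) uv.2)) - ent (margV p)| ≤ ε ∧
    |(-(1 / (n : ℝ)) * logb 2 (seqProb p (fun i => (uv.1 i, uv.2 i)))) - ent p| ≤ ε}

/-- The B-typical set `B^n_{V,ε}(U)`. -/
def BtypicalSet (p : U × V → ℝ) (n : ℕ) (ε : ℝ) : Set (Fin n → U) :=
  {u | u ∈ typicalSet (margU p) n ε ∧
    1 - ε ≤ ∑ v : Fin n → V,
      if (u, v) ∈ jointTypicalSet p n ε then ∏ i, condVU p (u i) (v i) else 0}

/-!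
Put `t = min ε 1`. By Chebyshev's inequality for the three self-informations `-log p(u)`,
`-log p(v)`, `-log p(u,v)`, an i.i.d. pair sequence is jointly `t`-typical with probability at
least `1 - t/2` once `n` is large. This probability is the `p(u)`-average of the conditional
probability of joint typicality given `u`, which is at most `1` on `B^n_{V,t}(U)` and below `1 - t`
off it, so `B^n_{V,t}(U)` has probability at least `1/2`. Each of its elements has probability at
most `2^{-n(H(U)-t)}`, hence it has at least `2^{n(H(U)-t)-1}` elements. Finally
`B^n_{V,t}(U) ⊆ B^n_{V,ε}(U)`, every `u` there has `p(u) ≥ 2^{-n(H(U)+ε)}`, and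
`1 + n t ≤ 2 n ε` as soon as `n ε ≥ 1`.
-/

section IIDSequences

variable {α : Type*} {w : α → ℝ} {n : ℕ}

lemma seqProb_nonneg (hw0 : ∀ a, 0 ≤ w a) (u : Fin n → α) : 0 ≤ seqProb w u :=
  Finset.prod_nonneg fun i _ => hw0 (u i)

lemma pos_of_seqProb_pos (hw0 : ∀ a, 0 ≤ w a) {u : Fin n → α} (hu : 0 < seqProb w u)
    (i : Fin n) : 0 < w (u i) :=
  (hw0 (u i)).lt_of_ne' (Finset.prod_ne_zero_iff.mp hu.ne' i (Finset.mem_univ i))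

lemma neg_inv_mul_logb_seqProb {q : α → ℝ} {u : Fin n → α} (hq : ∀ i, 0 < q (u i)) :
    -(1 / (n : ℝ)) * logb 2 (seqProb q u) = (∑ i, -logb 2 (q (u i))) / n := by
  rw [seqProb, Real.logb_prod _ _ fun i _ => (hq i).ne', Finset.sum_neg_distrib]
  ring

variable [Fintype α]

def seqProbSet (w : α → ℝ) (S : Set (Fin n → α)) : ℝ :=
  ∑ u with u ∈ S, seqProb w u

lemma sum_seqProb_mul_prod (w : α → ℝ) (h : Fin n → α → ℝ) :
    ∑ u : Fin n → α, seqProb w u * ∏ i, h i (u i) = ∏ i, ∑ a, w a * h i a := by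
  simp only [seqProb, ← Finset.prod_mul_distrib, Fintype.prod_sum]

lemma sum_seqProb (hw1 : ∑ a, w a = 1) : ∑ u : Fin n → α, seqProb w u = 1 := by
  simpa [hw1] using sum_seqProb_mul_prod (n := n) w fun _ _ => 1

/-- Write `X (u i) * X (u j)` as a product over all coordinates, so that the sum factors. -/
lemma sum_seqProb_mul_mul (hw1 : ∑ a, w a = 1) {X : α → ℝ} (hX : ∑ a, w a * X a = 0)
    (i j : Fin n) :
    ∑ u : Fin n → α, seqProb w u * (X (u i) * X (u j)) =
      if i = j then ∑ a, w a * X a ^ 2 else 0 := by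
  have hfactor : ∀ u : Fin n → α, X (u i) * X (u j) =
      ∏ k, (if k = i then X (u k) else 1) * (if k = j then X (u k) else 1) := by
    intro u
    rw [Finset.prod_mul_distrib, Finset.prod_ite_eq' Finset.univ i (fun k => X (u k)),
      Finset.prod_ite_eq' Finset.univ j (fun k => X (u k))]
    simp
  simp only [hfactor]
  rw [sum_seqProb_mul_prod w fun k a => (if k = i then X a else 1) * (if k = j then X a else 1)]
  split_ifs with hij
  · subst hij
    rw [Finset.prod_eq_single i (fun k _ hk => by simp [hk, hw1]) (by simp)]
    simp [sq]
  · exact Finset.prod_eq_zero (Finset.mem_univ i) (by simpa [hij] using hX)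

lemma sum_seqProb_mul_sum_sq (hw1 : ∑ a, w a = 1) {X : α → ℝ} (hX : ∑ a, w a * X a = 0) :
    ∑ u : Fin n → α, seqProb w u * (∑ i, X (u i)) ^ 2 = n * ∑ a, w a * X a ^ 2 := by
  have hexpand : ∀ u : Fin n → α, seqProb w u * (∑ i, X (u i)) ^ 2 =
      ∑ i, ∑ j, seqProb w u * (X (u i) * X (u j)) := by
    intro u
    rw [sq, Finset.sum_mul_sum, Finset.mul_sum]
    simp only [Finset.mul_sum]
  simp only [hexpand]
  rw [Finset.sum_comm]
  simp only [Finset.sum_comm (γ := Fin n → α), sum_seqProb_mul_mul hw1 hX]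
  simp

lemma seqProbSet_deviation_le (hw0 : ∀ a, 0 ≤ w a) (hw1 : ∑ a, w a = 1) (hn : 0 < n)
    {f : α → ℝ} {μ : ℝ} (hμ : ∑ a, w a * f a = μ) {t : ℝ} (ht : 0 < t) :
    seqProbSet w {u : Fin n → α | t < |(∑ i, f (u i)) / n - μ|} ≤
      (∑ a, w a * (f a - μ) ^ 2) / (n * t ^ 2) := by
  have hnR : (0 : ℝ) < n := by exact_mod_cast hn
  have hX : ∑ a, w a * (f a - μ) = 0 := by
    simp [mul_sub, Finset.sum_sub_distrib, ← Finset.sum_mul, hw1, hμ]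
  have hdev : ∀ u : Fin n → α, (∑ i, f (u i)) / n - μ = (∑ i, (f (u i) - μ)) / n := by
    intro u
    simp only [Finset.sum_sub_distrib, Finset.sum_const, Finset.card_univ, Fintype.card_fin,
      nsmul_eq_mul]
    field_simp
  calc seqProbSet w {u : Fin n → α | t < |(∑ i, f (u i)) / n - μ|}
      ≤ ∑ u with t < |(∑ i, f (u i)) / n - μ|,
          seqProb w u * ((∑ i, (f (u i) - μ)) ^ 2 / (n * t) ^ 2) := by
        refine Finset.sum_le_sum fun u hu => le_mul_of_one_le_right (seqProb_nonneg hw0 u) ?_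
        rw [Finset.mem_filter, Set.mem_ofPred_eq, hdev, abs_div, abs_of_pos hnR,
          lt_div_iff₀ hnR] at hu
        rw [one_le_div (by positivity), ← sq_abs (∑ i, _), mul_comm (n : ℝ)]
        exact pow_le_pow_left₀ (by positivity) hu.2.le 2
    _ ≤ ∑ u : Fin n → α, seqProb w u * ((∑ i, (f (u i) - μ)) ^ 2 / (n * t) ^ 2) :=
        Finset.sum_le_sum_of_subset_of_nonneg (Finset.filter_subset _ _)
          fun u _ _ => mul_nonneg (seqProb_nonneg hw0 u) (by positivity)
    _ = (∑ a, w a * (f a - μ) ^ 2) / (n * t ^ 2) := by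
        simp only [mul_div_assoc', ← Finset.sum_div, sum_seqProb_mul_sum_sq hw1 hX]
        field_simp

lemma seqProbSet_mono_ae (hw0 : ∀ a, 0 ≤ w a) {S T : Set (Fin n → α)}
    (hST : ∀ u ∈ S, 0 < seqProb w u → u ∈ T) : seqProbSet w S ≤ seqProbSet w T := by
  simp only [seqProbSet, Finset.sum_filter]
  refine Finset.sum_le_sum fun u _ => ?_
  split_ifs with hS hT hT
  · exact le_rfl
  · exact ((seqProb_nonneg hw0 u).eq_or_lt.resolve_right fun hpos => hT (hST u hS hpos)).ge
  · exact seqProb_nonneg hw0 u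
  · exact le_rfl

lemma seqProbSet_union_le (hw0 : ∀ a, 0 ≤ w a) (S T : Set (Fin n → α)) :
    seqProbSet w (S ∪ T) ≤ seqProbSet w S + seqProbSet w T := by
  simp only [seqProbSet, Finset.sum_filter, ← Finset.sum_add_distrib]
  refine Finset.sum_le_sum fun u _ => ?_
  have := seqProb_nonneg hw0 u
  split_ifs <;> simp_all

lemma seqProbSet_compl (hw1 : ∑ a, w a = 1) (S : Set (Fin n → α)) :
    seqProbSet w Sᶜ = 1 - seqProbSet w S := by
  rw [← sum_seqProb hw1, ← Finset.sum_filter_add_sum_filter_not Finset.univ (· ∈ S)]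
  simp [seqProbSet]

lemma seqProbSet_le_ncard_mul {S : Set (Fin n → α)} {M : ℝ}
    (hM : ∀ u ∈ S, seqProb w u ≤ M) : seqProbSet w S ≤ S.ncard * M := by
  rw [seqProbSet, Set.filter_mem_univ_eq_toFinset, Set.ncard_eq_toFinset_card' S,
    ← nsmul_eq_mul]
  exact Finset.sum_le_card_nsmul _ _ M fun u hu => hM u (Set.mem_toFinset.mp hu)

lemma rpow_le_seqProb_le_rpow_of_mem_typicalSet (hn : 0 < n) {q : α → ℝ} {t : ℝ}
    {u : Fin n → α} (hu : u ∈ typicalSet q n t) :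
    (2 : ℝ) ^ (-(n * (ent q + t))) ≤ seqProb q u ∧
      seqProb q u ≤ (2 : ℝ) ^ (-(n * (ent q - t))) := by
  obtain ⟨hpos, hdev⟩ := hu
  have hnR : (0 : ℝ) < n := by exact_mod_cast hn
  have hscale : -(1 / (n : ℝ)) * logb 2 (seqProb q u) * n = -logb 2 (seqProb q u) := by
    field_simp
  rw [← Real.rpow_logb (b := 2) (x := seqProb q u) (by norm_num) (by norm_num) hpos]
  obtain ⟨hlo, hhi⟩ := abs_le.mp hdev
  constructor <;> refine Real.rpow_le_rpow_of_exponent_le (by norm_num) ?_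
  · nlinarith
  · nlinarith

end IIDSequences

section JointDistribution

variable {p : U × V → ℝ}

omit [Fintype U] in
lemma margU_nonneg (hp0 : ∀ x, 0 ≤ p x) (u : U) : 0 ≤ margU p u :=
  Finset.sum_nonneg fun v _ => hp0 (u, v)

omit [Fintype U] in
lemma le_margU (hp0 : ∀ x, 0 ≤ p x) (x : U × V) : p x ≤ margU p x.1 :=
  Finset.single_le_sum (f := fun v => p (x.1, v)) (fun _ _ => hp0 _) (Finset.mem_univ x.2)

omit [Fintype V] in
lemma le_margV (hp0 : ∀ x, 0 ≤ p x) (x : U × V) : p x ≤ margV p x.2 :=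
  Finset.single_le_sum (f := fun u => p (u, x.2)) (fun _ _ => hp0 _) (Finset.mem_univ x.1)

lemma sum_mul_comp_fst (p : U × V → ℝ) (F : U → ℝ) :
    ∑ x, p x * F x.1 = ∑ u, margU p u * F u := by
  simp only [Fintype.sum_prod_type, margU, Finset.sum_mul]

lemma sum_mul_comp_snd (p : U × V → ℝ) (F : V → ℝ) :
    ∑ x, p x * F x.2 = ∑ v, margV p v * F v := by
  simp only [Fintype.sum_prod_type_right, margV, Finset.sum_mul]

lemma sum_margU (hp1 : ∑ x, p x = 1) : ∑ u, margU p u = 1 := by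
  simpa using (sum_mul_comp_fst p fun _ => 1).symm.trans (by simpa using hp1)

lemma sum_mul_neg_logb_eq_ent {α : Type*} [Fintype α] (q : α → ℝ) :
    ∑ a, q a * -logb 2 (q a) = ent q := by
  simp [ent, Finset.sum_neg_distrib]

omit [Fintype U] in
lemma seqProb_zip (hp0 : ∀ x, 0 ≤ p x) {n : ℕ} (u : Fin n → U) (v : Fin n → V) :
    seqProb p (fun i => (u i, v i)) = seqProb (margU p) u * ∏ i, condVU p (u i) (v i) := by
  rw [seqProb, seqProb, ← Finset.prod_mul_distrib]
  refine Finset.prod_congr rfl fun i _ => ?_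
  by_cases h : margU p (u i) = 0
  · simp [condVU, h, le_antisymm (h ▸ le_margU hp0 (u i, v i)) (hp0 _)]
  · rw [condVU, mul_div_cancel₀ _ h]

end JointDistribution

section JointTypicality

variable {p : U × V → ℝ} {n : ℕ} {t : ℝ}

def jointInfoVariance (p : U × V → ℝ) : ℝ :=
  (∑ x, p x * (-logb 2 (margU p x.1) - ent (margU p)) ^ 2) +
    (∑ x, p x * (-logb 2 (margV p x.2) - ent (margV p)) ^ 2) +
    ∑ x, p x * (-logb 2 (p x) - ent p) ^ 2

lemma mem_jointTypicalSet_of_deviation_le (hp0 : ∀ x, 0 ≤ p x) {x : Fin n → U × V}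
    (hx : 0 < seqProb p x)
    (hU : |(∑ i, -logb 2 (margU p (x i).1)) / n - ent (margU p)| ≤ t)
    (hV : |(∑ i, -logb 2 (margV p (x i).2)) / n - ent (margV p)| ≤ t)
    (hUV : |(∑ i, -logb 2 (p (x i))) / n - ent p| ≤ t) :
    (fun i => (x i).1, fun i => (x i).2) ∈ jointTypicalSet p n t := by
  have hpos := pos_of_seqProb_pos hp0 hx
  have hposU i : 0 < margU p (x i).1 := (hpos i).trans_le (le_margU hp0 (x i))
  have hposV i : 0 < margV p (x i).2 := (hpos i).trans_le (le_margV hp0 (x i))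
  refine ⟨Finset.prod_pos fun i _ => hposU i, Finset.prod_pos fun i _ => hposV i, hx, ?_, ?_, ?_⟩
  · rwa [neg_inv_mul_logb_seqProb hposU]
  · rwa [neg_inv_mul_logb_seqProb hposV]
  · exact (neg_inv_mul_logb_seqProb hpos).symm ▸ hUV

lemma seqProbSet_not_mem_jointTypicalSet_le (hp0 : ∀ x, 0 ≤ p x) (hp1 : ∑ x, p x = 1)
    (hn : 0 < n) (ht : 0 < t) :
    seqProbSet p {x : Fin n → U × V | (fun i => (x i).1, fun i => (x i).2) ∉
      jointTypicalSet p n t} ≤ jointInfoVariance p / (n * t ^ 2) := by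
  have hmeanU : ∑ x, p x * -logb 2 (margU p x.1) = ent (margU p) := by
    rw [sum_mul_comp_fst p fun u => -logb 2 (margU p u), sum_mul_neg_logb_eq_ent]
  have hmeanV : ∑ x, p x * -logb 2 (margV p x.2) = ent (margV p) := by
    rw [sum_mul_comp_snd p fun v => -logb 2 (margV p v), sum_mul_neg_logb_eq_ent]
  calc _ ≤ seqProbSet p
          ({x | t < |(∑ i, -logb 2 (margU p (x i).1)) / n - ent (margU p)|} ∪
            {x | t < |(∑ i, -logb 2 (margV p (x i).2)) / n - ent (margV p)|} ∪
            {x | t < |(∑ i, -logb 2 (p (x i))) / n - ent p|}) := by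
        refine seqProbSet_mono_ae hp0 fun x hx hpos => ?_
        by_contra hdev
        simp only [Set.mem_union, Set.mem_ofPred_eq, not_or, not_lt] at hdev
        exact hx (mem_jointTypicalSet_of_deviation_le hp0 hpos hdev.1.1 hdev.1.2 hdev.2)
    _ ≤ seqProbSet p {x | t < |(∑ i, -logb 2 (margU p (x i).1)) / n - ent (margU p)|} +
          seqProbSet p {x | t < |(∑ i, -logb 2 (margV p (x i).2)) / n - ent (margV p)|} +
          seqProbSet p {x | t < |(∑ i, -logb 2 (p (x i))) / n - ent p|} :=
        (seqProbSet_union_le hp0 _ _).trans (add_le_add_left (seqProbSet_union_le hp0 _ _) _)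
    _ ≤ jointInfoVariance p / (n * t ^ 2) := by
        rw [jointInfoVariance, add_div, add_div]
        exact add_le_add (add_le_add (seqProbSet_deviation_le hp0 hp1 hn hmeanU ht)
          (seqProbSet_deviation_le hp0 hp1 hn hmeanV ht))
          (seqProbSet_deviation_le hp0 hp1 hn (sum_mul_neg_logb_eq_ent p) ht)

end JointTypicality

section BTypicality

variable {p : U × V → ℝ} {n : ℕ} {t : ℝ}

def condJointTypicalProb (p : U × V → ℝ) (n : ℕ) (t : ℝ) (u : Fin n → U) : ℝ :=
  ∑ v : Fin n → V, if (u, v) ∈ jointTypicalSet p n t then ∏ i, condVU p (u i) (v i) else 0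

lemma condJointTypicalProb_le_one (hp0 : ∀ x, 0 ≤ p x) (u : Fin n → U) :
    condJointTypicalProb p n t u ≤ 1 := by
  have hcond a b : 0 ≤ condVU p a b := div_nonneg (hp0 _) (margU_nonneg hp0 a)
  calc condJointTypicalProb p n t u ≤ ∑ v : Fin n → V, ∏ i, condVU p (u i) (v i) :=
        Finset.sum_le_sum fun v _ => by
          split_ifs
          exacts [le_rfl, Finset.prod_nonneg fun i _ => hcond _ _]
    _ = ∏ i, margU p (u i) / margU p (u i) := by
        rw [← Fintype.prod_sum fun i b => condVU p (u i) b]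
        simp only [condVU, ← Finset.sum_div, margU]
    _ ≤ 1 := Finset.prod_le_one (fun i _ => div_nonneg (margU_nonneg hp0 _) (margU_nonneg hp0 _))
        fun i _ => div_self_le_one _

lemma condJointTypicalProb_eq_zero {u : Fin n → U} (hu : u ∉ typicalSet (margU p) n t) :
    condJointTypicalProb p n t u = 0 :=
  Finset.sum_eq_zero fun _ _ => if_neg fun huv => hu ⟨huv.1, huv.2.2.2.1⟩

lemma sum_seqProb_mul_condJointTypicalProb (hp0 : ∀ x, 0 ≤ p x) :
    ∑ u, seqProb (margU p) u * condJointTypicalProb p n t u =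
      seqProbSet p {x : Fin n → U × V | (fun i => (x i).1, fun i => (x i).2) ∈
        jointTypicalSet p n t} := by
  rw [seqProbSet, Finset.sum_filter,
    ← (Equiv.arrowProdEquivProdArrow (Fin n) (fun _ => U) (fun _ => V)).symm.sum_comp,
    Fintype.sum_prod_type]
  refine Finset.sum_congr rfl fun u _ => ?_
  rw [condJointTypicalProb, Finset.mul_sum]
  refine Finset.sum_congr rfl fun v _ => ?_
  rw [mul_ite, mul_zero, ← seqProb_zip hp0]
  rfl

/-- Off `BtypicalSet p n t` the conditional probability is below `1 - t`, on it at most `1`. -/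
lemma sum_seqProb_mul_condJointTypicalProb_le (hp0 : ∀ x, 0 ≤ p x) (hp1 : ∑ x, p x = 1)
    (ht1 : t ≤ 1) :
    ∑ u, seqProb (margU p) u * condJointTypicalProb p n t u ≤
      1 - t + t * seqProbSet (margU p) (BtypicalSet p n t) := by
  have hterm (u : Fin n → U) : seqProb (margU p) u * condJointTypicalProb p n t u ≤
      (1 - t) * seqProb (margU p) u +
        t * (if u ∈ BtypicalSet p n t then seqProb (margU p) u else 0) := by
    have hs := seqProb_nonneg (margU_nonneg hp0) u
    split_ifs with hB
    · nlinarith [condJointTypicalProb_le_one hp0 (t := t) u]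
    · by_cases hA : u ∈ typicalSet (margU p) n t
      · have hlt : condJointTypicalProb p n t u < 1 - t := not_le.mp fun h => hB ⟨hA, h⟩
        nlinarith
      · rw [condJointTypicalProb_eq_zero hA]
        nlinarith
  calc _ ≤ ∑ u, ((1 - t) * seqProb (margU p) u +
          t * (if u ∈ BtypicalSet p n t then seqProb (margU p) u else 0)) :=
        Finset.sum_le_sum fun u _ => hterm u
    _ = 1 - t + t * seqProbSet (margU p) (BtypicalSet p n t) := by
        rw [Finset.sum_add_distrib, ← Finset.mul_sum, ← Finset.mul_sum,
          sum_seqProb (sum_margU hp1), seqProbSet, Finset.sum_filter, mul_one]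

lemma half_le_seqProbSet_BtypicalSet (hp0 : ∀ x, 0 ≤ p x) (hp1 : ∑ x, p x = 1) (hn : 0 < n)
    (ht : 0 < t) (ht1 : t ≤ 1) (hvar : jointInfoVariance p / (n * t ^ 2) ≤ t / 2) :
    1 / 2 ≤ seqProbSet (margU p) (BtypicalSet p n t) := by
  have hbad := seqProbSet_not_mem_jointTypicalSet_le hp0 hp1 hn ht
  rw [← Set.compl_ofPred, seqProbSet_compl hp1, ← sum_seqProb_mul_condJointTypicalProb hp0] at hbad
  have := sum_seqProb_mul_condJointTypicalProb_le hp0 hp1 (n := n) ht1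
  nlinarith

end BTypicality

section Monotonicity

variable {p : U × V → ℝ} {n : ℕ} {t ε : ℝ}

lemma typicalSet_mono {α : Type*} [Fintype α] {q : α → ℝ} (h : t ≤ ε) :
    typicalSet q n t ⊆ typicalSet q n ε :=
  fun _ hu => ⟨hu.1, hu.2.trans h⟩

lemma jointTypicalSet_mono (h : t ≤ ε) : jointTypicalSet p n t ⊆ jointTypicalSet p n ε :=
  fun _ huv => ⟨huv.1, huv.2.1, huv.2.2.1, huv.2.2.2.1.trans h, huv.2.2.2.2.1.trans h,
    huv.2.2.2.2.2.trans h⟩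

lemma condJointTypicalProb_mono (hp0 : ∀ x, 0 ≤ p x) (h : t ≤ ε) (u : Fin n → U) :
    condJointTypicalProb p n t u ≤ condJointTypicalProb p n ε u := by
  refine Finset.sum_le_sum fun v _ => ?_
  split_ifs with ht hε
  · exact le_rfl
  · exact absurd (jointTypicalSet_mono h ht) hε
  · exact Finset.prod_nonneg fun i _ => div_nonneg (hp0 _) (margU_nonneg hp0 _)
  · exact le_rfl

lemma BtypicalSet_mono (hp0 : ∀ x, 0 ≤ p x) (h : t ≤ ε) :
    BtypicalSet p n t ⊆ BtypicalSet p n ε :=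
  fun u hu => ⟨typicalSet_mono h hu.1,
    (sub_le_sub_left h 1).trans (hu.2.trans (condJointTypicalProb_mono hp0 h u))⟩

end Monotonicity

lemma rpow_le_ncard_BtypicalSet {p : U × V → ℝ} (hp0 : ∀ x, 0 ≤ p x) (hp1 : ∑ x, p x = 1)
    {n : ℕ} (hn : 0 < n) {t : ℝ} (ht : 0 < t) (ht1 : t ≤ 1)
    (hvar : jointInfoVariance p / (n * t ^ 2) ≤ t / 2) :
    (2 : ℝ) ^ (n * (ent (margU p) - t) - 1) ≤ (BtypicalSet p n t).ncard := by
  set x : ℝ := n * (ent (margU p) - t)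
  have hmass : seqProbSet (margU p) (BtypicalSet p n t) ≤ (BtypicalSet p n t).ncard * 2 ^ (-x) :=
    seqProbSet_le_ncard_mul fun u hu => (rpow_le_seqProb_le_rpow_of_mem_typicalSet hn hu.1).2
  have hhalf := half_le_seqProbSet_BtypicalSet hp0 hp1 hn ht ht1 hvar
  calc (2 : ℝ) ^ (x - 1) = 1 / 2 * 2 ^ x := by
        rw [Real.rpow_sub_one (by norm_num)]
        ring
    _ ≤ (BtypicalSet p n t).ncard * 2 ^ (-x) * 2 ^ x := by gcongr; linarith
    _ = (BtypicalSet p n t).ncard := by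
        rw [mul_assoc, ← Real.rpow_add (by norm_num), neg_add_cancel, Real.rpow_zero, mul_one]

lemma eventually_rpow_le_ncard_BtypicalSet {p : U × V → ℝ} (hp0 : ∀ x, 0 ≤ p x)
    (hp1 : ∑ x, p x = 1) {t : ℝ} (ht : 0 < t) (ht1 : t ≤ 1) :
    ∀ᶠ n : ℕ in Filter.atTop,
      (2 : ℝ) ^ (n * (ent (margU p) - t) - 1) ≤ (BtypicalSet p n t).ncard := by
  filter_upwards [Filter.eventually_gt_atTop 0,
    (tendsto_const_div_atTop_nhds_zero_nat (jointInfoVariance p / t ^ 2)).eventually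
      (Iic_mem_nhds (half_pos ht))] with n hn hvar
  rw [div_div, mul_comm] at hvar
  exact rpow_le_ncard_BtypicalSet hp0 hp1 hn ht ht1 hvar

/-- **Reciprocal-cardinality bound for B-typical sets**: for every `ε > 0` there exists
`N` such that for all `n ≥ N` and every `u ∈ B^n_{V,ε}(U)`,
`1/|B^n_{V,ε}(U)| ≤ 2^{3nε}·p(u)`. -/
theorem B_typical_inv_card_le
    (p : U × V → ℝ) (hp0 : ∀ x, 0 ≤ p x) (hp1 : ∑ x, p x = 1)
    (ε : ℝ) (hε : 0 < ε) :
    ∃ N : ℕ, ∀ n : ℕ, N ≤ n → ∀ u : Fin n → U, u ∈ BtypicalSet p n ε →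
      1 / ((BtypicalSet p n ε).ncard : ℝ) ≤
        (2 : ℝ) ^ (3 * (n : ℝ) * ε) * seqProb (margU p) u := by
  set t := min ε 1
  obtain ⟨N, hN⟩ := Filter.eventually_atTop.mp <| (Filter.eventually_gt_atTop 0).and <|
    (eventually_rpow_le_ncard_BtypicalSet hp0 hp1 (lt_min hε one_pos) (min_le_right ε 1)).and
      (tendsto_natCast_atTop_atTop.eventually_ge_atTop (1 / ε))
  refine ⟨N, fun n hn u hu => ?_⟩
  obtain ⟨hn0, hcard, hlarge⟩ := hN n hn
  have hnε : 1 ≤ n * ε := by rwa [div_le_iff₀ hε] at hlarge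
  replace hcard : (2 : ℝ) ^ (n * (ent (margU p) - t) - 1) ≤ (BtypicalSet p n ε).ncard :=
    hcard.trans <| by exact_mod_cast Set.ncard_le_ncard (BtypicalSet_mono hp0 (min_le_left _ _))
  calc 1 / ((BtypicalSet p n ε).ncard : ℝ) ≤ 1 / 2 ^ (n * (ent (margU p) - t) - 1) :=
        one_div_le_one_div_of_le (by positivity) hcard
    _ = 2 ^ (-(n * (ent (margU p) - t) - 1)) := by rw [Real.rpow_neg (by norm_num), one_div]
    _ ≤ 2 ^ (3 * n * ε + -(n * (ent (margU p) + ε))) := by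
        refine Real.rpow_le_rpow_of_exponent_le (by norm_num) ?_
        nlinarith [mul_le_mul_of_nonneg_left (min_le_left ε 1) (Nat.cast_nonneg n)]
    _ ≤ 2 ^ (3 * n * ε) * seqProb (margU p) u := by
        rw [Real.rpow_add (by norm_num)]
        gcongr
        exact (rpow_le_seqProb_le_rpow_of_mem_typicalSet hn0 hu.1).1
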